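/- Let C ⊆ (Z_2)^n with |C| odd, let A be the adjacency matrix of the cubelike graph X(C), and let G be a graph whose adjacency matrix B has eigenvalues −1 and 2 (e.g., the complete graph K₃). Then exp(iπ(A ⊗ B)) is not a scalar multiple of the identity; in particular the Kronecker product graph X(C) × G is not periodic at time π. -/

import Mathlib

open Matrix Kronecker Complex

noncomputable def cubeAdj {n : ℕ} (C : Finset (Fin n → ZMod 2)) :
    Matrix (Fin n → ZMod 2) (Fin n → ZMod 2) ℂ :=
  Matrix.of fun u v => if u - v ∈ C then 1 else 0

/-! Write `A = ∑_{c ∈ C} P_c` with `P_c` the translation matrices, which are commuting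
involutions. An involution is `1 - 2f` with `f` idempotent, so `exp (kπi P_c) = (-1)^k`, and
hence `exp (kπi (A ⊗ 1)) = (-1)^(k |C|) = (-1)^k` because `|C|` is odd. As `1 ⊗ F₁` and
`1 ⊗ F₂` are complementary idempotents commuting with `A ⊗ 1`, and
`A ⊗ B = (A ⊗ 1) (-(1 ⊗ F₁) + 2 (1 ⊗ F₂))`, this gives
`exp (πi (A ⊗ B)) = -(1 ⊗ F₁) + 1 ⊗ F₂`. If this were scalar, `F₂ - F₁` and hence `F₁` would be
scalar; but a scalar idempotent is `0` or `1`, so `F₁ = 0` or `F₂ = 0`. -/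

open NormedSpace Real
open scoped Function

section BanachAlgebra

variable {𝔸 : Type*} [NormedRing 𝔸] [NormedAlgebra ℚ 𝔸] [CompleteSpace 𝔸]

theorem exp_mul_of_isIdempotentElem {y e : 𝔸} (hye : Commute y e) (he : IsIdempotentElem e) :
    exp (y * e) = exp y * e + (1 - e) := by
  have hpow (n : ℕ) : (y * e) ^ n = y ^ n * e + if n = 0 then 1 - e else 0 := by
    rcases n with _ | n
    · simp
    · rw [hye.mul_pow, he.pow_succ_eq]; simp
  have hsum := ((exp_series_hasSum_exp' (𝕂 := ℚ) y).mul_right e).add (hasSum_ite_eq 0 (1 - e))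
  refine (exp_series_hasSum_exp' (𝕂 := ℚ) (y * e)).unique (hsum.congr_fun fun n => ?_)
  rw [hpow, smul_add, smul_mul_assoc]
  split_ifs <;> simp_all

variable [NormedAlgebra ℂ 𝔸]

theorem exp_int_mul_pi_mul_I_smul_of_mul_self_eq_one {p : 𝔸} (hp : p * p = 1) (k : ℤ) :
    exp (((k : ℂ) * (π * I)) • p) = (-1 : ℂ) ^ k • 1 := by
  set f : 𝔸 := (2⁻¹ : ℂ) • (1 - p)
  have hf : IsIdempotentElem f := by
    simp only [IsIdempotentElem, f, smul_mul_smul_comm, sub_mul, mul_sub, hp, one_mul, mul_one]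
    module
  have hsplit : ((k : ℂ) * (π * I)) • p =
      algebraMap ℂ 𝔸 (k * (π * I)) + algebraMap ℂ 𝔸 (((-k : ℤ) : ℂ) * (2 * π * I)) * f := by
    simp only [Algebra.algebraMap_eq_smul_one, smul_mul_assoc, one_mul, f]
    push_cast
    module
  rw [hsplit, NormedSpace.exp_add_of_commute (Algebra.commute_algebraMap_left _ _),
    exp_mul_of_isIdempotentElem (Algebra.commute_algebraMap_left _ _) hf, ← algebraMap_exp_comm,
    ← algebraMap_exp_comm, ← Complex.exp_eq_exp_ℂ, exp_int_mul_two_pi_mul_I, exp_int_mul,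
    exp_pi_mul_I]
  simp [Algebra.algebraMap_eq_smul_one]

theorem exp_int_mul_pi_mul_I_smul_sum_of_mul_self_eq_one {ι : Type*} (s : Finset ι) {p : ι → 𝔸}
    (hp : ∀ i ∈ s, p i * p i = 1) (hcomm : (s : Set ι).Pairwise (Commute on p)) (k : ℤ) :
    exp (((k : ℂ) * (π * I)) • ∑ i ∈ s, p i) = ((-1 : ℂ) ^ k) ^ s.card • 1 := by
  have hcomm' : (s : Set ι).Pairwise (Commute on fun i => ((k : ℂ) * (π * I)) • p i) :=
    hcomm.mono' fun i j h => (h.smul_left _).smul_right _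
  rw [Finset.smul_sum]
  refine (NormedSpace.exp_sum_of_commute _ _ hcomm').trans <|
    (Finset.noncommProd_eq_pow_card _ _ _ _
      fun i hi => exp_int_mul_pi_mul_I_smul_of_mul_self_eq_one (hp i hi) k).trans ?_
  rw [smul_pow, one_pow]

theorem exp_pi_mul_I_smul_mul_of_isIdempotentElem {x f₁ f₂ : 𝔸}
    (hx : ∀ k : ℤ, exp (((k : ℂ) * (π * I)) • x) = (-1 : ℂ) ^ k • 1)
    (hf₁ : IsIdempotentElem f₁) (hsum : f₁ + f₂ = 1) (hxf : Commute x f₁) (μ₁ μ₂ : ℤ) :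
    exp ((π * I : ℂ) • (x * ((μ₁ : ℂ) • f₁ + (μ₂ : ℂ) • f₂))) =
      (-1 : ℂ) ^ μ₁ • f₁ + (-1 : ℂ) ^ μ₂ • f₂ := by
  obtain rfl : f₂ = 1 - f₁ := eq_sub_of_add_eq' hsum
  have hsplit : (π * I : ℂ) • (x * ((μ₁ : ℂ) • f₁ + (μ₂ : ℂ) • (1 - f₁))) =
      ((μ₂ : ℂ) * (π * I)) • x + ((((μ₁ - μ₂ : ℤ) : ℂ) * (π * I)) • x) * f₁ := by
    push_cast
    simp only [mul_add, mul_sub, mul_smul_comm, mul_one, smul_mul_assoc]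
    module
  have hcomm (a b : ℂ) : Commute (a • x) (b • x * f₁) :=
    (((Commute.refl x).smul_left a).smul_right b).mul_right (hxf.smul_left a)
  rw [hsplit, NormedSpace.exp_add_of_commute (hcomm _ _),
    exp_mul_of_isIdempotentElem (hxf.smul_left _) hf₁, hx, hx]
  have hpow : (-1 : ℂ) ^ μ₂ * (-1) ^ (μ₁ - μ₂) = (-1) ^ μ₁ := by
    rw [← zpow_add₀ (by norm_num), add_sub_cancel]
  simp only [smul_one_mul, smul_add, smul_smul, hpow]

end BanachAlgebra

theorem IsIdempotentElem.eq_zero_or_eq_one_of_eq_smul_one {K A : Type*} [Field K] [Ring A]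
    [Algebra K A] {e : A} {c : K} (he : IsIdempotentElem e) (hc : e = c • 1) : e = 0 ∨ e = 1 := by
  nontriviality A
  rw [hc, ← Algebra.algebraMap_eq_smul_one] at he ⊢
  have hc' : IsIdempotentElem c := (algebraMap K A).injective (by rwa [map_mul])
  rcases IsIdempotentElem.iff_eq_zero_or_one.mp hc' with rfl | rfl <;> simp

theorem Matrix.sum_kronecker {ι l m n p α : Type*} [CommSemiring α] (s : Finset ι)
    (A : ι → Matrix l m α) (B : Matrix n p α) : (∑ i ∈ s, A i) ⊗ₖ B = ∑ i ∈ s, A i ⊗ₖ B :=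
  LinearMap.map_sum₂ (kroneckerBilinear (R := α)) s A B

theorem Matrix.kronecker_sub {l m n p α : Type*} [CommRing α] (A : Matrix l m α)
    (B₁ B₂ : Matrix n p α) : A ⊗ₖ (B₁ - B₂) = A ⊗ₖ B₁ - A ⊗ₖ B₂ :=
  map_sub (kroneckerBilinear (R := α) A) B₁ B₂

theorem Matrix.eq_smul_one_of_one_kronecker_eq_smul_one {l n α : Type*} [Nonempty l]
    [DecidableEq l] [DecidableEq n] [MulZeroOneClass α] {M : Matrix n n α} {c : α}
    (h : (1 : Matrix l l α) ⊗ₖ M = c • 1) : M = c • 1 := by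
  obtain ⟨a⟩ := ‹Nonempty l›
  ext i j
  simpa [one_apply] using congr_fun (congr_fun h (a, i)) (a, j)

noncomputable def translationMatrix {n : ℕ} (c : Fin n → ZMod 2) :
    Matrix (Fin n → ZMod 2) (Fin n → ZMod 2) ℂ :=
  Matrix.of fun u v => if u - v = c then 1 else 0

theorem translationMatrix_mul {n : ℕ} (c d : Fin n → ZMod 2) :
    translationMatrix c * translationMatrix d = translationMatrix (c + d) := by
  ext u v
  have hu (w : Fin n → ZMod 2) : u - w = c ↔ w = u - c := by
    constructor <;> rintro rfl <;> abel
  have huv : u - c - v = d ↔ u - v = c + d := by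
    rw [sub_right_comm, sub_eq_iff_eq_add']
  simp only [translationMatrix, mul_apply, of_apply, hu, ite_mul, one_mul, zero_mul,
    Finset.sum_ite_eq', Finset.mem_univ, if_true, huv]

theorem translationMatrix_mul_self {n : ℕ} (c : Fin n → ZMod 2) :
    translationMatrix c * translationMatrix c = 1 := by
  rw [translationMatrix_mul, ZModModule.add_self]
  ext u v
  simp [translationMatrix, one_apply, sub_eq_zero]

theorem cubeAdj_eq_sum_translationMatrix {n : ℕ} (C : Finset (Fin n → ZMod 2)) :
    cubeAdj C = ∑ c ∈ C, translationMatrix c := by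
  ext u v
  simp [cubeAdj, translationMatrix, Matrix.sum_apply]

theorem exp_int_mul_pi_mul_I_smul_cubeAdj_kronecker_one {n : ℕ} {C : Finset (Fin n → ZMod 2)}
    (hodd : Odd C.card) {p : Type*} [Fintype p] [DecidableEq p] (k : ℤ) :
    exp (((k : ℂ) * (π * I)) • (cubeAdj C ⊗ₖ (1 : Matrix p p ℂ))) = (-1 : ℂ) ^ k • 1 := by
  set P := fun c : Fin n → ZMod 2 => translationMatrix c ⊗ₖ (1 : Matrix p p ℂ)
  have hsq (c) : P c * P c = 1 := by
    rw [← mul_kronecker_mul, translationMatrix_mul_self, one_mul, one_kronecker_one]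
  have hcomm : (C : Set _).Pairwise (Commute on P) := by
    intro c _ d _ _
    simp only [Function.onFun, Commute, SemiconjBy, P, ← mul_kronecker_mul, translationMatrix_mul,
      add_comm]
  rw [cubeAdj_eq_sum_translationMatrix, sum_kronecker]
  -- `exp` does not depend on the norm, so any Banach algebra norm on matrices will do.
  open scoped Norms.Operator in
  refine (exp_int_mul_pi_mul_I_smul_sum_of_mul_self_eq_one C (fun c _ => hsq c) hcomm k).trans ?_
  rw [← zpow_natCast, ← _root_.zpow_mul, mul_comm, _root_.zpow_mul, zpow_natCast, hodd.neg_one_pow]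

theorem exp_pi_mul_I_smul_cubeAdj_kronecker {n : ℕ} {C : Finset (Fin n → ZMod 2)}
    (hodd : Odd C.card) {p : Type*} [Fintype p] [DecidableEq p] {B F₁ F₂ : Matrix p p ℂ}
    (hB : B = (-1 : ℂ) • F₁ + (2 : ℂ) • F₂) (hsum : F₁ + F₂ = 1) (hF₁ : IsIdempotentElem F₁) :
    exp ((π * I : ℂ) • (cubeAdj C ⊗ₖ B)) = -(1 ⊗ₖ F₁) + 1 ⊗ₖ F₂ := by
  let E : Matrix p p ℂ → Matrix ((Fin n → ZMod 2) × p) ((Fin n → ZMod 2) × p) ℂ := fun F => 1 ⊗ₖ F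
  have hAB : cubeAdj C ⊗ₖ B =
      (cubeAdj C ⊗ₖ 1) * (((-1 : ℤ) : ℂ) • E F₁ + ((2 : ℤ) : ℂ) • E F₂) := by
    rw [← kronecker_smul, ← kronecker_smul, ← kronecker_add, ← mul_kronecker_mul, mul_one, one_mul,
      hB]
    norm_num
  have hidem : IsIdempotentElem (E F₁) := by
    rw [IsIdempotentElem, ← mul_kronecker_mul, one_mul, hF₁]
  have hsumE : E F₁ + E F₂ = 1 := by
    rw [← kronecker_add, hsum, one_kronecker_one]
  have hcomm : Commute (cubeAdj C ⊗ₖ 1) (E F₁) := by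
    simp only [Commute, SemiconjBy, E, ← mul_kronecker_mul, one_mul, mul_one]
  open scoped Norms.Operator in
  refine (hAB ▸ exp_pi_mul_I_smul_mul_of_isIdempotentElem
    (exp_int_mul_pi_mul_I_smul_cubeAdj_kronecker_one hodd) hidem hsumE hcomm (-1) 2).trans ?_
  norm_num [E]

theorem not_periodic_at_pi_general (n : ℕ) (C : Finset (Fin n → ZMod 2)) (hodd : Odd C.card)
    {p : Type*} [Fintype p] [DecidableEq p]
    (B : Matrix p p ℂ) (F₁ F₂ : Matrix p p ℂ)
    (hB : B = (-1 : ℂ) • F₁ + (2 : ℂ) • F₂)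
    (hsum : F₁ + F₂ = 1)
    (hproj₁ : F₁ * F₁ = F₁)
    (hne₁ : F₁ ≠ 0) (hne₂ : F₂ ≠ 0) :
    ¬ ∃ γ : ℂ,
      NormedSpace.exp (((Real.pi : ℂ) * Complex.I) • (cubeAdj C ⊗ₖ B)) = γ • 1 := by
  rintro ⟨γ, hγ⟩
  rw [exp_pi_mul_I_smul_cubeAdj_kronecker hodd hB hsum hproj₁] at hγ
  have hdiff : F₂ - F₁ = γ • 1 := eq_smul_one_of_one_kronecker_eq_smul_one
    (l := Fin n → ZMod 2) (by rw [kronecker_sub, ← hγ]; abel)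
  have hF₁ : F₁ = ((1 - γ) / 2) • 1 := by
    linear_combination (norm := module) (2⁻¹ : ℂ) • (hsum - hdiff)
  rcases IsIdempotentElem.eq_zero_or_eq_one_of_eq_smul_one hproj₁ hF₁ with h | h
  · exact hne₁ h
  · exact hne₂ (by simpa [h] using hsum)

theorem not_periodic_at_pi (n : ℕ) (C : Finset (Fin n → ZMod 2)) (hodd : Odd C.card)
    {p : Type*} [Fintype p] [DecidableEq p]
    (B : Matrix p p ℂ) (F₁ F₂ : Matrix p p ℂ)
    (hB : B = (-1 : ℂ) • F₁ + (2 : ℂ) • F₂)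
    (hsum : F₁ + F₂ = 1)
    (hproj₁ : F₁ * F₁ = F₁) (hproj₂ : F₂ * F₂ = F₂)
    (horth : F₁ * F₂ = 0) (horth' : F₂ * F₁ = 0)
    (hne₁ : F₁ ≠ 0) (hne₂ : F₂ ≠ 0) :
    ¬ ∃ γ : ℂ,
      NormedSpace.exp (((Real.pi : ℂ) * Complex.I) • (cubeAdj C ⊗ₖ B)) = γ • 1 :=
  not_periodic_at_pi_general n C hodd B F₁ F₂ hB hsum hproj₁ hne₁ hne₂
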